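/- Let E = Z_3 × Z_3 = S × C₁ with S = ⟨s⟩ and C₁ = ⟨c₁⟩, and let A be an S-ring over E such that C₁ is an A-subgroup and c₁ and c₁² lie in distinct basic sets (both singletons {c₁}, {c₁²} are basic). Then, up to a Cayley isomorphism fixing C₁, the partition of E\{e} into basic sets is one of exactly four possibilities: (1) {c₁},{c₁²},{s,sc₁,sc₁²,s²,s²c₁,s²c₁²}; (2) all eight singletons; (3) {c₁},{c₁²},{s,sc₁,sc₁²},{s²,s²c₁,s²c₁²}; (4) {c₁},{c₁²},{s,s²},{sc₁,s²c₁},{sc₁²,s²c₁²}. -/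

import Mathlib

open scoped BigOperators Pointwise Classical

noncomputable section

/-- The group-ring element `X̄ = Σ_{x∈X} x` in `ℤG`. -/
def ind {G : Type*} [Group G] (X : Finset G) : MonoidAlgebra ℤ G :=
  ∑ x ∈ X, MonoidAlgebra.single x 1

/-- The ℤ-span of the class sums of the members of `S`. -/
def spanA {G : Type*} [Group G] (S : Finset (Finset G)) :
    Submodule ℤ (MonoidAlgebra ℤ G) :=
  Submodule.span ℤ (ind '' (S : Set (Finset G)))

/-- `S` is the partition of basic sets of an S-ring over `G`. -/
structure IsSRing {G : Type*} [Group G] (S : Finset (Finset G)) : Prop where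
  cover : ∀ g : G, ∃ X ∈ S, g ∈ X
  disj : ∀ X ∈ S, ∀ Y ∈ S, X ≠ Y → Disjoint X Y
  nonempty : ∀ X ∈ S, X.Nonempty
  one_mem : ({1} : Finset G) ∈ S
  inv_mem : ∀ X ∈ S, X.image (·⁻¹) ∈ S
  mul_closed : ∀ a ∈ spanA S, ∀ b ∈ spanA S, a * b ∈ spanA S

/-- `X` is an `A`-set: its class sum lies in the span of the basic class sums. -/
def IsASet {G : Type*} [Group G] (S : Finset (Finset G)) (X : Finset G) : Prop :=
  ind X ∈ spanA S

/-- The finset underlying a subgroup of a finite group. -/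
def subgroupFinset {G : Type*} [Group G] [Fintype G] (H : Subgroup G) : Finset G :=
  Finset.univ.filter (· ∈ H)

/-- `H` is an `A`-subgroup. -/
def IsASubgroup {G : Type*} [Group G] [Fintype G] (S : Finset (Finset G))
    (H : Subgroup G) : Prop :=
  IsASet S (subgroupFinset H)

/-- The radical `rad(X) = {g : gX = Xg = X}` as a subgroup. -/
def radSubgroup {G : Type*} [Group G] (X : Finset G) : Subgroup G where
  carrier := {g : G | X.image (g * ·) = X ∧ X.image (· * g) = X}
  one_mem' := by
    constructor <;> · simp only [one_mul, mul_one]; exact Finset.image_id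
  mul_mem' := by
    rintro a b ⟨ha1, ha2⟩ ⟨hb1, hb2⟩
    constructor
    · have : X.image (a * b * ·) = (X.image (b * ·)).image (a * ·) := by
        rw [Finset.image_image]
        exact Finset.image_congr (fun x _ => by simp [mul_assoc])
      rw [this, hb1, ha1]
    · have : X.image (· * (a * b)) = (X.image (· * a)).image (· * b) := by
        rw [Finset.image_image]
        exact Finset.image_congr (fun x _ => by simp [mul_assoc])
      rw [this, ha2, hb2]
  inv_mem' := by
    rintro a ⟨ha1, ha2⟩
    constructor
    · have := congrArg (Finset.image (a⁻¹ * ·)) ha1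
      rw [Finset.image_image] at this
      have h2 : X.image ((a⁻¹ * ·) ∘ (a * ·)) = X := by
        rw [show ((a⁻¹ * ·) ∘ (a * ·)) = id by funext x; simp, Finset.image_id]
      rw [← this, h2]
    · have := congrArg (Finset.image (· * a⁻¹)) ha2
      rw [Finset.image_image] at this
      have h2 : X.image ((· * a⁻¹) ∘ (· * a)) = X := by
        rw [show ((· * a⁻¹) ∘ (· * a)) = id by funext x; simp, Finset.image_id]
      rw [← this, h2]

end

/-- The group `E = ℤ₃ × ℤ₃ = S × C₁` (written multiplicatively). -/
abbrev Egrp := Multiplicative (ZMod 3) × Multiplicative (ZMod 3)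

/-- The generator `s` of the factor `S`. -/
def sEl : Egrp := (Multiplicative.ofAdd (1 : ZMod 3), 1)

/-- The generator `c₁` of the factor `C₁`. -/
def cEl : Egrp := (1, Multiplicative.ofAdd (1 : ZMod 3))

/-- Possible partition (1). -/
def P1 : Finset (Finset Egrp) :=
  { {1}, {cEl}, {cEl ^ 2},
    {sEl, sEl * cEl, sEl * cEl ^ 2, sEl ^ 2, sEl ^ 2 * cEl, sEl ^ 2 * cEl ^ 2} }

/-- Possible partition (2): all singletons. -/
def P2 : Finset (Finset Egrp) :=
  { {1}, {cEl}, {cEl ^ 2}, {sEl}, {sEl ^ 2}, {sEl * cEl}, {sEl ^ 2 * cEl},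
    {sEl * cEl ^ 2}, {sEl ^ 2 * cEl ^ 2} }

/-- Possible partition (3). -/
def P3 : Finset (Finset Egrp) :=
  { {1}, {cEl}, {cEl ^ 2}, {sEl, sEl * cEl, sEl * cEl ^ 2},
    {sEl ^ 2, sEl ^ 2 * cEl, sEl ^ 2 * cEl ^ 2} }

/-- Possible partition (4). -/
def P4 : Finset (Finset Egrp) :=
  { {1}, {cEl}, {cEl ^ 2}, {sEl, sEl ^ 2}, {sEl * cEl, sEl ^ 2 * cEl},
    {sEl * cEl ^ 2, sEl ^ 2 * cEl ^ 2} }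

/-! Right multiplication by a basic singleton `{c}` permutes the basic sets: for basic `X`, `Xc`
is an `A`-set, so it contains the basic set `Y` through any of its points, and `Yc⁻¹` is an
`A`-set meeting `X`, so `X ⊆ Yc⁻¹` (here `{c⁻¹} = {c}⁻¹` is basic too). Hence the basic sets are
the `C₁`-translates of `{e}`, of the basic set `B ∋ s` and of `B⁻¹`. Now `B` misses `C₁`, and
either `Bc₁ = B` or `Bc₁ ∩ B = ∅`; this leaves six candidates for `B`. Four of them give
(1)–(4) directly; `B = {s, s²c₁}` and `B = {s, s²c₁²}` are carried to (4) by a shear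
`(x, y) ↦ (x, y + kx)`, which fixes `C₁` pointwise. -/

open Finset

section SRing

variable {G : Type*} [Group G] {S : Finset (Finset G)}

lemma coeff_ind (X : Finset G) (g : G) : (ind X).coeff g = if g ∈ X then 1 else 0 := by
  simp [ind, MonoidAlgebra.coeff_sum, MonoidAlgebra.coeff_single, Finsupp.single_apply]

lemma coeff_eq_of_mem_spanA {a : MonoidAlgebra ℤ G} (ha : a ∈ spanA S) {g g' : G}
    (h : ∀ X ∈ S, g ∈ X ↔ g' ∈ X) : a.coeff g = a.coeff g' := by
  induction ha using Submodule.span_induction with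
  | mem x hx =>
    obtain ⟨X, hX, rfl⟩ := hx
    simp only [coeff_ind, h X hX]
  | zero => rfl
  | add x y _ _ hx hy => simp only [MonoidAlgebra.coeff_add, Finsupp.add_apply, hx, hy]
  | smul r x _ hx => simp only [MonoidAlgebra.coeff_smul_apply, hx]

lemma isASet_of_mem {X : Finset G} (hX : X ∈ S) : IsASet S X :=
  Submodule.subset_span ⟨X, hX, rfl⟩

lemma ind_mul_single [DecidableEq G] (X : Finset G) (c : G) :
    ind X * MonoidAlgebra.single c 1 = ind (X.image (· * c)) := by
  rw [ind, ind, sum_mul, sum_image fun a _ b _ h => mul_right_cancel h]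
  simp only [MonoidAlgebra.single_mul_single, mul_one]

lemma IsSRing.eq_of_mem_of_mem (hS : IsSRing S) {X Y : Finset G} (hX : X ∈ S) (hY : Y ∈ S)
    {g : G} (hgX : g ∈ X) (hgY : g ∈ Y) : X = Y := by
  by_contra hne
  exact disjoint_left.1 (hS.disj X hX Y hY hne) hgX hgY

lemma IsSRing.subset_of_isASet (hS : IsSRing S) {X Y : Finset G} (hY : IsASet S Y)
    (hX : X ∈ S) {g : G} (hgX : g ∈ X) (hgY : g ∈ Y) : X ⊆ Y := by
  intro x hx
  have hgx : ∀ Z ∈ S, g ∈ Z ↔ x ∈ Z := fun Z hZ =>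
    ⟨fun hgZ => hS.eq_of_mem_of_mem hX hZ hgX hgZ ▸ hx,
      fun hxZ => hS.eq_of_mem_of_mem hX hZ hx hxZ ▸ hgX⟩
  have := coeff_eq_of_mem_spanA hY hgx
  rw [coeff_ind, coeff_ind, if_pos hgY] at this
  by_contra hxY
  rw [if_neg hxY] at this
  exact one_ne_zero this

lemma IsSRing.isASet_image_mul [DecidableEq G] (hS : IsSRing S) {Y : Finset G}
    (hY : IsASet S Y) {c : G} (hc : {c} ∈ S) : IsASet S (Y.image (· * c)) := by
  rw [IsASet, ← ind_mul_single]
  have hc' := isASet_of_mem hc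
  rw [IsASet, ind, sum_singleton] at hc'
  exact hS.mul_closed _ hY _ hc'

lemma IsSRing.image_inv_mem [DecidableEq G] (hS : IsSRing S) {X : Finset G} (hX : X ∈ S) :
    X.image (·⁻¹) ∈ S := by
  convert hS.inv_mem X hX

lemma IsSRing.image_mul_mem [DecidableEq G] (hS : IsSRing S) {c : G} (hc : {c} ∈ S)
    {X : Finset G} (hX : X ∈ S) : X.image (· * c) ∈ S := by
  obtain ⟨x, hx⟩ := hS.nonempty X hX
  obtain ⟨Y, hY, hxcY⟩ := hS.cover (x * c)
  have hc' : {c⁻¹} ∈ S := by simpa using hS.image_inv_mem hc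
  have hYX : Y ⊆ X.image (· * c) :=
    hS.subset_of_isASet (hS.isASet_image_mul (isASet_of_mem hX) hc) hY hxcY
      (mem_image_of_mem _ hx)
  have hXY : X ⊆ Y.image (· * c⁻¹) :=
    hS.subset_of_isASet (hS.isASet_image_mul (isASet_of_mem hY) hc') hX hx
      (mem_image.2 ⟨_, hxcY, by simp⟩)
  have hXY' : X.image (· * c) ⊆ Y := by
    intro y hy
    obtain ⟨x', hx', rfl⟩ := mem_image.1 hy
    obtain ⟨y', hy', hxy⟩ := mem_image.1 (hXY hx')
    simpa [← hxy] using hy'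
  rwa [hXY'.antisymm hYX]

lemma IsSRing.image_mul_pow_mem [DecidableEq G] (hS : IsSRing S) {c : G} (hc : {c} ∈ S)
    {X : Finset G} (hX : X ∈ S) (n : ℕ) : X.image (· * c ^ n) ∈ S := by
  induction n with
  | zero => simpa using hX
  | succ n ih =>
    convert hS.image_mul_mem hc ih using 1
    rw [image_image]
    simp only [Function.comp_def, pow_succ, mul_assoc]

lemma IsSRing.eq_of_subset_of_cover (hS : IsSRing S) {T : Finset (Finset G)} (hTS : T ⊆ S)
    (hT : ∀ g, ∃ X ∈ T, g ∈ X) : S = T := by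
  refine Subset.antisymm (fun X hX => ?_) hTS
  obtain ⟨x, hx⟩ := hS.nonempty X hX
  obtain ⟨Y, hY, hxY⟩ := hT x
  rwa [hS.eq_of_mem_of_mem hX (hTS hY) hx hxY]

end SRing

def cTranslates (B : Finset Egrp) : Finset (Finset Egrp) :=
  (({{1}, B, B.image (·⁻¹)} : Finset (Finset Egrp)) ×ˢ range 3).image
    fun p => p.1.image (· * cEl ^ p.2)

lemma IsSRing.cTranslates_subset {S : Finset (Finset Egrp)} (hS : IsSRing S)
    (hc : {cEl} ∈ S) {B : Finset Egrp} (hB : B ∈ S) : cTranslates B ⊆ S := by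
  intro X hX
  obtain ⟨⟨Y, n⟩, hYn, rfl⟩ := mem_image.1 hX
  refine hS.image_mul_pow_mem hc ?_ n
  rcases mem_insert.1 (mem_product.1 hYn).1 with rfl | hY
  · exact hS.one_mem
  rcases mem_insert.1 hY with rfl | hY
  · exact hB
  · exact mem_singleton.1 hY ▸ hS.image_inv_mem hB

lemma exists_mem_cTranslates {B : Finset Egrp} (hs : sEl ∈ B) (g : Egrp) :
    ∃ X ∈ cTranslates B, g ∈ X := by
  obtain ⟨i, hi, j, hj, rfl⟩ : ∃ i < 3, ∃ j < 3, g = sEl ^ i * cEl ^ j := by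
    revert g; decide
  obtain ⟨Y, hY, hiY⟩ : ∃ Y ∈ ({{1}, B, B.image (·⁻¹)} : Finset (Finset Egrp)), sEl ^ i ∈ Y := by
    interval_cases i
    · exact ⟨{1}, by simp⟩
    · exact ⟨B, by simp, by simpa using hs⟩
    · exact ⟨B.image (·⁻¹), by simp, mem_image.2 ⟨sEl, hs, by decide⟩⟩
  exact ⟨Y.image (· * cEl ^ j), mem_image.2 ⟨(Y, j), mem_product.2 ⟨hY, mem_range.2 hj⟩, rfl⟩,
    mem_image_of_mem _ hiY⟩

def outsideC₁ : Finset Egrp :=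
  {sEl, sEl * cEl, sEl * cEl ^ 2, sEl ^ 2, sEl ^ 2 * cEl, sEl ^ 2 * cEl ^ 2}

lemma IsSRing.subset_outsideC₁ {S : Finset (Finset Egrp)} (hS : IsSRing S)
    (hc : {cEl} ∈ S) {B : Finset Egrp} (hB : B ∈ S) (hs : sEl ∈ B) : B ⊆ outsideC₁ := by
  intro g hg
  have hE : ∀ g : Egrp, g ∈ outsideC₁ ∨ ∃ n < 3, g = cEl ^ n := by decide
  obtain hg' | ⟨n, -, rfl⟩ := hE g
  · exact hg'
  have hcn : {cEl ^ n} ∈ S := by simpa using hS.image_mul_pow_mem hc hS.one_mem n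
  have hsc : sEl = cEl ^ n :=
    mem_singleton.1 (hS.eq_of_mem_of_mem hB hcn hg (mem_singleton_self _) ▸ hs)
  have := congrArg Prod.fst hsc
  simp [sEl, cEl] at this

set_option synthInstance.maxSize 1000 in
lemma subset_outsideC₁_cases {B : Finset Egrp} (hB : B ⊆ outsideC₁) (hs : sEl ∈ B)
    (hc : B.image (· * cEl) = B ∨ Disjoint (B.image (· * cEl)) B) :
    B = outsideC₁ ∨ B = {sEl, sEl * cEl, sEl * cEl ^ 2} ∨ B = {sEl} ∨ B = {sEl, sEl ^ 2} ∨
      B = {sEl, sEl ^ 2 * cEl} ∨ B = {sEl, sEl ^ 2 * cEl ^ 2} := by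
  have hL : [sEl, sEl * cEl, sEl * cEl ^ 2, sEl ^ 2, sEl ^ 2 * cEl, sEl ^ 2 * cEl ^ 2].toFinset =
      outsideC₁ := by decide
  obtain ⟨l, hl, rfl⟩ : ∃ l ∈ [sEl, sEl * cEl, sEl * cEl ^ 2, sEl ^ 2, sEl ^ 2 * cEl,
      sEl ^ 2 * cEl ^ 2].sublists, l.toFinset = B := by
    refine ⟨_, List.mem_sublists.2 (List.filter_sublist (p := (· ∈ B))), ?_⟩
    rw [List.toFinset_filter, hL]
    simpa only [decide_eq_true_eq, filter_mem_eq_inter, inter_eq_right] using hB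
  clear hB hL
  -- `decide` runs through the sublists of a list far faster than through a `Finset.powerset`
  revert l
  decide

def shear (k : ZMod 3) : Egrp ≃* Egrp where
  toFun p := (p.1, p.2 * Multiplicative.ofAdd (k * p.1.toAdd))
  invFun p := (p.1, p.2 * Multiplicative.ofAdd (-(k * p.1.toAdd)))
  left_inv p := by ext <;> simp
  right_inv p := by ext <;> simp
  map_mul' p q := by
    ext
    · rfl
    · simp only [Prod.snd_mul, Prod.fst_mul, toAdd_mul, mul_add, ofAdd_add]
      ac_rfl

lemma image_zpowers_shear (k : ZMod 3) :
    (shear k : Egrp → Egrp) '' (Subgroup.zpowers cEl : Set Egrp) = Subgroup.zpowers cEl := by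
  have hc : shear k cEl = cEl := by ext <;> simp [shear, cEl]
  rw [← MonoidHom.coe_coe, ← Subgroup.coe_map, MonoidHom.map_zpowers, MonoidHom.coe_coe, hc]

lemma exists_shear_image_cTranslates {B : Finset Egrp} (hB : B ⊆ outsideC₁) (hs : sEl ∈ B)
    (hc : B.image (· * cEl) = B ∨ Disjoint (B.image (· * cEl)) B) :
    ∃ k : ZMod 3,
      (cTranslates B).image (Finset.image (shear k)) = P1 ∨
      (cTranslates B).image (Finset.image (shear k)) = P2 ∨
      (cTranslates B).image (Finset.image (shear k)) = P3 ∨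
      (cTranslates B).image (Finset.image (shear k)) = P4 := by
  rcases subset_outsideC₁_cases hB hs hc with rfl | rfl | rfl | rfl | rfl | rfl
  · exact ⟨0, Or.inl (by decide)⟩
  · exact ⟨0, Or.inr (Or.inr (Or.inl (by decide)))⟩
  · exact ⟨0, Or.inr (Or.inl (by decide))⟩
  · exact ⟨0, Or.inr (Or.inr (Or.inr (by decide)))⟩
  · exact ⟨2, Or.inr (Or.inr (Or.inr (by decide)))⟩
  · exact ⟨1, Or.inr (Or.inr (Or.inr (by decide)))⟩

theorem stmt19_general (S : Finset (Finset Egrp)) (hS : IsSRing S)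
    (hc : ({cEl} : Finset Egrp) ∈ S) :
    ∃ f : Egrp ≃* Egrp,
      (f : Egrp → Egrp) '' (Subgroup.zpowers cEl : Set Egrp) =
        (Subgroup.zpowers cEl : Set Egrp) ∧
      (S.image (Finset.image f) = P1 ∨ S.image (Finset.image f) = P2 ∨
       S.image (Finset.image f) = P3 ∨ S.image (Finset.image f) = P4) := by
  obtain ⟨B, hB, hs⟩ := hS.cover sEl
  have hS_eq : S = cTranslates B :=
    hS.eq_of_subset_of_cover (hS.cTranslates_subset hc hB) (exists_mem_cTranslates hs)
  have hBc : B.image (· * cEl) = B ∨ Disjoint (B.image (· * cEl)) B :=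
    (em _).imp_right (hS.disj _ (hS.image_mul_mem hc hB) _ hB)
  obtain ⟨k, hk⟩ := exists_shear_image_cTranslates (hS.subset_outsideC₁ hc hB hs) hs hBc
  exact ⟨shear k, image_zpowers_shear k, hS_eq ▸ hk⟩

/-- if `A` is an S-ring over `E = ℤ₃ × ℤ₃` such that `C₁` is an
`A`-subgroup and `{c₁}`, `{c₁²}` are basic sets, then up to a Cayley
isomorphism fixing `C₁` setwise, the basic-set partition is one of the four
listed possibilities. -/
theorem stmt19 (S : Finset (Finset Egrp)) (hS : IsSRing S)
    (hC1 : IsASubgroup S (Subgroup.zpowers cEl))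
    (hc : ({cEl} : Finset Egrp) ∈ S) (hc2 : ({cEl ^ 2} : Finset Egrp) ∈ S) :
    ∃ f : Egrp ≃* Egrp,
      (f : Egrp → Egrp) '' (Subgroup.zpowers cEl : Set Egrp) =
        (Subgroup.zpowers cEl : Set Egrp) ∧
      (S.image (Finset.image f) = P1 ∨ S.image (Finset.image f) = P2 ∨
       S.image (Finset.image f) = P3 ∨ S.image (Finset.image f) = P4) :=
  stmt19_general S hS hc
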